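/- Under the stated hypotheses, the twisted Long–Moody matrices satisfy the Artin relation for j ∉ {i, i+1}: S_i G_j = G_j S_i for all 1 ≤ i ≤ n−1 and 1 ≤ j ≤ n with j ≠ i and j ≠ i+1. -/

import Mathlib

open Matrix

namespace KLM

variable {k : Type*} [Field k]

/-- Assemble an `Nn × Nn` matrix from an `n × n` array of `N × N` blocks,
blocks being indexed by natural numbers (only indices `< n` are relevant). -/
def blk (n N : ℕ) (B : ℕ → ℕ → Matrix (Fin N) (Fin N) k) :
    Matrix (Fin n × Fin N) (Fin n × Fin N) k :=
  Matrix.of fun p q => B p.1.1 q.1.1 p.2 q.2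

/-- The Dettweiler–Reiter convolution matrix `G_j = ρ^{DR}_λ(x_j)` (0-based index `j`):
the identity except that the `j`-th block row is
`(λ(g_0−1), …, λ(g_{j−1}−1), λ g_j, g_{j+1}−1, …, g_{n−1}−1)`. -/
def G (n N : ℕ) (g : ℕ → Matrix (Fin N) (Fin N) k) (lam : k) (j : ℕ) :
    Matrix (Fin n × Fin N) (Fin n × Fin N) k :=
  blk n N fun r c =>
    if r = j then
      (if c < j then lam • (g c - 1) else if c = j then lam • g j else g c - 1)
    else if r = c then 1 else 0

/-- The Long–Moody matrix `S_i = ρ^{LM}(σ_i)` (0-based index `i`):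
`(s_i ⊕ ⋯ ⊕ s_i) · diag(1, …, 1, R_i, 1, …, 1)` where `R_i` is the
`2×2` block matrix with rows `(0, g_i)` and `(1, 1 − g_{i+1})`
placed in block rows/columns `i, i+1`. -/
def S (n N : ℕ) (g s : ℕ → Matrix (Fin N) (Fin N) k) (i : ℕ) :
    Matrix (Fin n × Fin N) (Fin n × Fin N) k :=
  blk n N fun r c =>
    if r = i ∧ c = i then 0
    else if r = i ∧ c = i + 1 then s i * g i
    else if r = i + 1 ∧ c = i then s i
    else if r = i + 1 ∧ c = i + 1 then s i * (1 - g (i + 1))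
    else if r = c then s i
    else 0

/-!
Write `G_j = 1 + X_j`, where `X_j` is zero outside its `j`-th block row `w`. For
`j ∉ {i, i+1}` the `j`-th block column of `S_i` is `s_i` on the diagonal and zero elsewhere,
so `S_i X_j` and `X_j S_i` both vanish outside block row `j`, where they are `s_i w` and `w S_i`.
Thus the theorem reduces to the block-row identity `s_i w = w S_i`, checked column by column:
away from columns `i, i+1` it is `s_i g_c = g_c s_i`; in columns `i` and `i+1` the entries
`w_i, w_{i+1}` carry the same scalar (`λ` or `1`, as `i, i+1` lie on the same side of `j`), and
the identity follows from `s_i g_i = g_{i+1} s_i` and `g_{i+1} s_i g_{i+1} = g_i g_{i+1} s_i`.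
-/

section ArtinAction

variable {R : Type*} [Ring R] {s g g' : R}

/-- Column `i+1` of the block-row identity; both sides equal `s g' - s`. -/
theorem mul_sub_one_eq_of_artin (h₁ : SemiconjBy s g g') (h₂ : g' * s * g' = g * g' * s) :
    s * (g' - 1) = (g - 1) * (s * g) + (g' - 1) * (s * (1 - g')) := by
  have h₂' : g' * (s * g') = g * (g' * s) := by rw [← mul_assoc, h₂, mul_assoc]
  have hg : (g - 1) * (s * g) = g * (g' * s) - g' * s := by
    rw [← h₁.eq]; noncomm_ring
  have hg' : (g' - 1) * (s * (1 - g')) = g' * s - g * (g' * s) - s + s * g' := by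
    rw [← h₂']; noncomm_ring
  rw [hg, hg']; noncomm_ring

end ArtinAction

section BlockMatrix

variable {R : Type*} {n N : ℕ}

theorem blk_mul [NonUnitalNonAssocSemiring R] (B C : ℕ → ℕ → Matrix (Fin N) (Fin N) R) :
    blk n N B * blk n N C = blk n N fun a b => ∑ m ∈ Finset.range n, B a m * C m b := by
  ext ⟨a, x⟩ ⟨b, y⟩
  simp only [blk, mul_apply, of_apply, Fintype.sum_prod_type, Matrix.sum_apply]
  exact Fin.sum_univ_eq_sum_range (fun m => ∑ z, B a.1 m x z * C m b.1 z y) n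

theorem blk_congr {B C : ℕ → ℕ → Matrix (Fin N) (Fin N) R}
    (h : ∀ a b, a < n → b < n → B a b = C a b) : blk n N B = blk n N C := by
  ext ⟨a, x⟩ ⟨b, y⟩
  simp only [blk, of_apply, h _ _ a.isLt b.isLt]

theorem blk_add [Add R] (B C : ℕ → ℕ → Matrix (Fin N) (Fin N) R) :
    blk n N B + blk n N C = blk n N (B + C) :=
  rfl

theorem blk_ite_eq_one [Zero R] [One R] :
    blk n N (fun r c => if r = c then (1 : Matrix (Fin N) (Fin N) R) else 0) = 1 := by
  ext ⟨a, x⟩ ⟨b, y⟩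
  by_cases hab : a = b
  · simp [blk, hab, one_apply]
  · simp [blk, Fin.val_ne_of_ne hab, one_apply, hab]

theorem commute_blk_one_add_row [Semiring R] {j : ℕ} (hj : j < n)
    {B : ℕ → ℕ → Matrix (Fin N) (Fin N) R} {t : Matrix (Fin N) (Fin N) R}
    {w : ℕ → Matrix (Fin N) (Fin N) R}
    (hcol : ∀ a < n, B a j = if a = j then t else 0)
    (hrow : ∀ b < n, t * w b = ∑ m ∈ Finset.range n, w m * B m b) :
    Commute (blk n N B) (1 + blk n N fun r c => if r = j then w c else 0) := by
  refine (Commute.one_right _).add_right ?_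
  rw [Commute, SemiconjBy, blk_mul, blk_mul]
  refine blk_congr fun a b ha hb => ?_
  simp only [mul_ite, mul_zero, ite_mul, zero_mul, Finset.sum_ite_eq', Finset.mem_range, hj,
    if_true, hcol a ha, Finset.sum_ite_irrel, Finset.sum_const_zero]
  split_ifs
  · rw [hrow b hb]
  · rfl

end BlockMatrix

section LongMoody

variable {n N : ℕ} (g s : ℕ → Matrix (Fin N) (Fin N) k) (lam : k) {i j : ℕ}

/-- The `j`-th block row of `G n N g lam j - 1`, its only nonzero block row. -/
def drRow (j c : ℕ) : Matrix (Fin N) (Fin N) k :=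
  if c < j then lam • (g c - 1) else if c = j then lam • g j - 1 else g c - 1

theorem G_eq_one_add (j : ℕ) :
    G n N g lam j = 1 + blk n N fun r c => if r = j then drRow g lam j c else 0 := by
  rw [G, ← blk_ite_eq_one, blk_add]
  refine blk_congr fun r c _ _ => ?_
  simp only [drRow, Pi.add_apply]
  split_ifs <;> first | subst_vars; omega | simp

def lmBlock (i : ℕ) : ℕ → ℕ → Matrix (Fin N) (Fin N) k := fun r c =>
  if r = i ∧ c = i then 0
  else if r = i ∧ c = i + 1 then s i * g i
  else if r = i + 1 ∧ c = i then s i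
  else if r = i + 1 ∧ c = i + 1 then s i * (1 - g (i + 1))
  else if r = c then s i
  else 0

theorem S_eq_blk (i : ℕ) : S n N g s i = blk n N (lmBlock g s i) :=
  rfl

theorem lmBlock_col_self (r : ℕ) : lmBlock g s i r i = if r = i + 1 then s i else 0 := by
  unfold lmBlock; split_ifs <;> first | rfl | omega

theorem lmBlock_col_succ (r : ℕ) :
    lmBlock g s i r (i + 1) =
      (if r = i then s i * g i else 0) + (if r = i + 1 then s i * (1 - g (i + 1)) else 0) := by
  unfold lmBlock; split_ifs <;> first | omega | simp

theorem lmBlock_col_of_ne {c : ℕ} (hci : c ≠ i) (hci1 : c ≠ i + 1) (r : ℕ) :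
    lmBlock g s i r c = if r = c then s i else 0 := by
  unfold lmBlock; split_ifs <;> first | rfl | omega

theorem exists_drRow_eq_smul (hji : j ≠ i) (hji1 : j ≠ i + 1) :
    ∃ a : k, drRow g lam j i = a • (g i - 1) ∧ drRow g lam j (i + 1) = a • (g (i + 1) - 1) := by
  by_cases hij : i < j
  · refine ⟨lam, ?_, ?_⟩ <;> simp only [drRow] <;> split_ifs <;> first | rfl | omega
  · refine ⟨1, ?_, ?_⟩ <;> simp only [drRow, one_smul] <;> split_ifs <;> first | rfl | omega

theorem mul_drRow_eq_sum (hi : i + 1 < n) (hji : j ≠ i) (hji1 : j ≠ i + 1)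
    (ha1 : s i * g i = g (i + 1) * s i)
    (ha2 : g (i + 1) * s i * g (i + 1) = g i * g (i + 1) * s i)
    (ha3 : ∀ c < n, c ≠ i → c ≠ i + 1 → s i * g c = g c * s i) {b : ℕ} (hb : b < n) :
    s i * drRow g lam j b = ∑ m ∈ Finset.range n, drRow g lam j m * lmBlock g s i m b := by
  obtain ⟨a, hwi, hwi1⟩ := exists_drRow_eq_smul g lam hji hji1
  by_cases hbi : b = i
  · subst hbi
    simp only [lmBlock_col_self, mul_ite, mul_zero, Finset.sum_ite_eq', Finset.mem_range,
      if_pos hi, hwi, hwi1]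
    exact ((SemiconjBy.sub_right ha1 (SemiconjBy.one_right _)).smul_right a).eq
  by_cases hbi1 : b = i + 1
  · subst hbi1
    simp only [lmBlock_col_succ, mul_add, mul_ite, mul_zero, Finset.sum_add_distrib,
      Finset.sum_ite_eq', Finset.mem_range, if_pos hi, if_pos (Nat.lt_of_succ_lt hi), hwi, hwi1]
    rw [mul_smul_comm, smul_mul_assoc, smul_mul_assoc, ← smul_add, mul_sub_one_eq_of_artin ha1 ha2]
  · have hcomm : Commute (s i) (g b) := ha3 b hb hbi hbi1
    simp only [lmBlock_col_of_ne g s hbi hbi1, mul_ite, mul_zero, Finset.sum_ite_eq',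
      Finset.mem_range, if_pos hb]
    refine Commute.eq ?_
    unfold drRow
    split_ifs with hbj hbj'
    · exact (hcomm.sub_right (Commute.one_right _)).smul_right lam
    · subst hbj'; exact (hcomm.smul_right lam).sub_right (Commute.one_right _)
    · exact hcomm.sub_right (Commute.one_right _)

end LongMoody

theorem twistedLM_artin_other_general
    (N n : ℕ)
    (g s : ℕ → Matrix (Fin N) (Fin N) k) (lam : k)
    (ha1 : ∀ i, i + 1 < n → s i * g i = g (i + 1) * s i)
    (ha2 : ∀ i, i + 1 < n → g (i + 1) * s i * g (i + 1) = g i * g (i + 1) * s i)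
    (ha3 : ∀ i j, i + 1 < n → j < n → j ≠ i → j ≠ i + 1 → s i * g j = g j * s i) :
    ∀ i j, i + 1 < n → j < n → j ≠ i → j ≠ i + 1 →
      S n N g s i * G n N g lam j = G n N g lam j * S n N g s i := by
  intro i j hi hj hji hji1
  rw [S_eq_blk, G_eq_one_add]
  refine (commute_blk_one_add_row hj (fun r _ => lmBlock_col_of_ne g s hji hji1 r) ?_).eq
  exact fun b hb => mul_drRow_eq_sum g s lam hi hji hji1 (ha1 i hi) (ha2 i hi)
    (fun c hc => ha3 i c hi hc) hb

/-- Artin relation for `j ∉ {i, i+1}`: `S_i G_j = G_j S_i`. -/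
theorem twistedLM_artin_other
    (N n : ℕ) (hN : 1 ≤ N) (hn : 2 ≤ n)
    (g s : ℕ → Matrix (Fin N) (Fin N) k) (lam : k) (hlam : lam ≠ 0)
    (hgu : ∀ j, j < n → IsUnit (g j))
    (hsu : ∀ i, i + 1 < n → IsUnit (s i))
    (hbr1 : ∀ i, i + 2 < n → s i * s (i + 1) * s i = s (i + 1) * s i * s (i + 1))
    (hbr2 : ∀ i j, i + 1 < n → j + 1 < n → (i + 2 ≤ j ∨ j + 2 ≤ i) →
      s i * s j = s j * s i)
    (ha1 : ∀ i, i + 1 < n → s i * g i = g (i + 1) * s i)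
    (ha2 : ∀ i, i + 1 < n → g (i + 1) * s i * g (i + 1) = g i * g (i + 1) * s i)
    (ha3 : ∀ i j, i + 1 < n → j < n → j ≠ i → j ≠ i + 1 → s i * g j = g j * s i) :
    ∀ i j, i + 1 < n → j < n → j ≠ i → j ≠ i + 1 →
      S n N g s i * G n N g lam j = G n N g lam j * S n N g s i :=
  twistedLM_artin_other_general N n g s lam ha1 ha2 ha3

end KLM
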